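/- Let d ≥ 2 be an integer, p ∈ [2,∞], and let U ⊆ [-1/2,1/2)^d be a finite set with 0 ∈ U. Suppose there are r affine hyperplanes H_1,…,H_r in ℝ^d, none containing 0, such that U\{0} ⊆ H_1 ∪ ⋯ ∪ H_r, and let η_k > 0 denote the Euclidean (ℓ²) distance from 0 to H_k. Fix a real n > 0 with max_{1≤k≤r} η_k ≤ (r+1)/(4n), and assume that for each k there exists a nonzero q_k ∈ ℤ^d that is a normal vector of H_k (i.e., q_k is orthogonal to the direction of H_k) with |q_k|₂ ≤ n/(r+1). Then there exists a trigonometric polynomial f ∈ P(Ω_n^p) such that f(0) = 1, f(u) = 0 for all u ∈ U\{0}, and ‖f‖_{L²(𝕋^d)} ≤ √(2^r / |Ω^p_{n/(r+1)}|_*) · ∏_{k=1}^r 1/(4·|q_k|₂·η_k), where |Ω^p_{n/(r+1)}|_* = #(Ω^p_{n/(r+1)} ∩ ℤ^d). -/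

import Mathlib

/-!
Let `m = n/(r+1)` and let `g` be the normalized Dirichlet kernel of `Ω_m^p ∩ ℤ^d`, so `g(0) = 1`
and, by Parseval, `‖g‖₂ = |Ω_m^p|_*^{-1/2}`. Write the normal of `H_k = {θ_k·x = c_k}` as
`q_k = t_k θ_k` and put `s_k = t_k c_k`, so that `q_k·u = s_k` on `H_k`. The factor
`φ_k(x) = (e(q_k·x) - e(s_k)) / (1 - e(s_k))` has frequencies `0, q_k ∈ Ω_m^p`, equals `1` at `0`
and vanishes on `H_k`. As `|s_k| = |q_k|₂ η_k ≤ 1/4`, concavity of `sin` on `[0, π/4]` gives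
`|1 - e(s_k)| ≥ 4√2 |s_k|`, hence `|φ_k| ≤ √2 / (4 |q_k|₂ η_k)`. The product `f = g ∏ φ_k` has
frequencies in `Ω_m^p + r Ω_m^p ⊆ Ω_n^p` and `‖f‖₂ ≤ ‖g‖₂ ∏ sup |φ_k|`.
-/

open MeasureTheory Finset
open scoped ENNReal Classical BigOperators

noncomputable section

namespace NF

variable {d : ℕ} {ι : Type*} [Fintype ι]

/-- ℓ^p norm on ℝ^d for p ∈ [1,∞] (encoded in ℝ≥0∞). -/
def lpnorm (p : ℝ≥0∞) (x : Fin d → ℝ) : ℝ :=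
  if p = ∞ then ⨆ i, |x i| else (∑ i, |x i| ^ p.toReal) ^ (1 / p.toReal)

/-- the closed ℓ^p ball Ω_m^p. -/
def lpBall (d : ℕ) (p : ℝ≥0∞) (m : ℝ) : Set (Fin d → ℝ) := {x | lpnorm p x ≤ m}

def dotR (ω x : Fin d → ℝ) : ℝ := ∑ i, ω i * x i

def l2norm (u : ι → ℂ) : ℝ := Real.sqrt (∑ k, ‖u k‖ ^ 2)

/-- the nonharmonic Fourier transform of u, as a function of ω. -/
def Fop (x : ι → Fin d → ℝ) (u : ι → ℂ) (ω : Fin d → ℝ) : ℂ :=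
  ∑ k, u k * Complex.exp (-(2 * Real.pi * Complex.I) * (dotR ω (x k) : ℝ))

/-- its L²(Ω) norm -/
def FopNorm (Ω : Set (Fin d → ℝ)) (x : ι → Fin d → ℝ) (u : ι → ℂ) : ℝ :=
  Real.sqrt (∫ ω in Ω, ‖Fop x u ω‖ ^ 2)

def sigmaMinF (Ω : Set (Fin d → ℝ)) (x : ι → Fin d → ℝ) : ℝ :=
  ⨅ u : {u : ι → ℂ // l2norm u = 1}, FopNorm Ω x u

def sigmaMaxF (Ω : Set (Fin d → ℝ)) (x : ι → Fin d → ℝ) : ℝ :=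
  ⨆ u : {u : ι → ℂ // l2norm u = 1}, FopNorm Ω x u

def intPt (ω : Fin d → ℤ) : Fin d → ℝ := fun i => (ω i : ℝ)

/-- squared ℓ² norm of Φ_{Ω,X} u, summing over integer points of Ω. -/
def PhiSq (Ω : Set (Fin d → ℝ)) (x : ι → Fin d → ℝ) (u : ι → ℂ) : ℝ :=
  ∑' ω : Fin d → ℤ, if intPt ω ∈ Ω then ‖Fop x u (intPt ω)‖ ^ 2 else 0

def PhiNorm (Ω : Set (Fin d → ℝ)) (x : ι → Fin d → ℝ) (u : ι → ℂ) : ℝ :=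
  Real.sqrt (PhiSq Ω x u)

def sigmaMinPhi (Ω : Set (Fin d → ℝ)) (x : ι → Fin d → ℝ) : ℝ :=
  ⨅ u : {u : ι → ℂ // l2norm u = 1}, PhiNorm Ω x u

def sigmaMaxPhi (Ω : Set (Fin d → ℝ)) (x : ι → Fin d → ℝ) : ℝ :=
  ⨆ u : {u : ι → ℂ // l2norm u = 1}, PhiNorm Ω x u

/-- torus ℓ^p distance. -/
def torusDist (p : ℝ≥0∞) (x y : Fin d → ℝ) : ℝ :=
  ⨅ n : Fin d → ℤ, lpnorm p (fun i => x i - y i + (n i : ℝ))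

/-- fundamental domain [-1/2,1/2)^d of the torus. -/
def cube (d : ℕ) : Set (Fin d → ℝ) := Set.univ.pi fun _ => Set.Ico (-(1:ℝ)/2) (1/2)

def torusL2 (f : (Fin d → ℝ) → ℂ) : ℝ := Real.sqrt (∫ x in cube d, ‖f x‖ ^ 2)

def fullL2 (f : (Fin d → ℝ) → ℂ) : ℝ := Real.sqrt (∫ x, ‖f x‖ ^ 2)

/-- membership in the Paley–Wiener space W(Ω). -/
def IsBandlimited (Ω : Set (Fin d → ℝ)) (f : (Fin d → ℝ) → ℂ) : Prop :=
  ∃ F : (Fin d → ℝ) → ℂ, MemLp F 2 (volume.restrict Ω) ∧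
    ∀ x, f x = ∫ ω in Ω, F ω * Complex.exp ((2 * Real.pi * Complex.I) * (dotR ω x : ℝ))

/-- membership in P(Ω): trigonometric polynomials with frequencies in Ω ∩ ℤ^d. -/
def IsTrigPoly (Ω : Set (Fin d → ℝ)) (f : (Fin d → ℝ) → ℂ) : Prop :=
  ∃ c : (Fin d → ℤ) → ℂ, (Function.support c).Finite ∧
    (∀ ω, c ω ≠ 0 → intPt ω ∈ Ω) ∧
    ∀ x, f x = ∑' ω : Fin d → ℤ, c ω * Complex.exp ((2 * Real.pi * Complex.I) * (dotR (intPt ω) x : ℝ))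

/-- |Ω|_* = #(Ω ∩ ℤ^d). -/
def intCard (Ω : Set (Fin d → ℝ)) : ℕ := Set.ncard {ω : Fin d → ℤ | intPt ω ∈ Ω}

/-- τ local sparsity ν_p(τ,X) for an indexed family. -/
def localSparsity (p : ℝ≥0∞) (τ : ℝ) (x : ι → Fin d → ℝ) : ℕ :=
  Finset.univ.sup fun k => (Finset.univ.filter fun j => torusDist p (x j) (x k) ≤ τ).card

/-- τ local sparsity ν_p(τ,X) for a finite set. -/
def finsetSparsity (p : ℝ≥0∞) (τ : ℝ) (X : Finset (Fin d → ℝ)) : ℕ :=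
  X.sup fun x => (X.filter fun y => torusDist p y x ≤ τ).card

/-- minimum torus ℓ^p separation of a finite set. -/
def finsetSep (p : ℝ≥0∞) (X : Finset (Fin d → ℝ)) : ℝ :=
  sInf {r | ∃ x ∈ X, ∃ y ∈ X, x ≠ y ∧ torusDist p x y = r}

/-- Fourier transform of a real-valued function on ℝ^d. -/
def FT (f : (Fin d → ℝ) → ℝ) (ξ : Fin d → ℝ) : ℂ :=
  ∫ x, (f x : ℂ) * Complex.exp (-(2 * Real.pi * Complex.I) * (dotR ξ x : ℝ))


/-- X consists of clumps with parameters (p,τ,λ) in the torus ℓ^p metric. -/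
def ConsistsOfClumps (p : ℝ≥0∞) (τ : ℝ) (lam : ℕ) (X : Finset (Fin d → ℝ)) : Prop :=
  ∃ r : ℕ, 0 < r ∧ ∃ C : Fin r → Finset (Fin d → ℝ),
    (∀ k, (C k).card = lam) ∧
    (∀ k l, k ≠ l → Disjoint (C k) (C l)) ∧
    Finset.univ.biUnion C = X ∧
    (∀ k, ∀ x ∈ C k, ∀ y ∈ C k, torusDist p x y ≤ τ) ∧
    (1 < r → ∀ k l, k ≠ l → ∀ x ∈ C k, ∀ y ∈ C l, τ < torusDist p x y)

section Interpolant

open Real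
open scoped FourierTransform Pointwise

lemma intPt_add (a b : Fin d → ℤ) : intPt (a + b) = intPt a + intPt b := by
  funext i; simp [intPt]

lemma intPt_zero : intPt (0 : Fin d → ℤ) = 0 := by
  funext i; simp [intPt]

lemma dotR_eq_dotProduct (ν x : Fin d → ℝ) : dotR ν x = ν ⬝ᵥ x := rfl

def expDot (ν x : Fin d → ℝ) : ℂ := 𝐞 (dotR ν x)

lemma expDot_eq_exp (ν x : Fin d → ℝ) :
    expDot ν x = Complex.exp ((2 * π * Complex.I) * (dotR ν x : ℝ)) := by
  rw [expDot, Real.fourierChar_apply]; push_cast; ring_nf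

lemma expDot_add_left (a b x : Fin d → ℝ) : expDot (a + b) x = expDot a x * expDot b x := by
  simp [expDot, dotR_eq_dotProduct, add_dotProduct, AddChar.map_add_eq_mul]

lemma expDot_zero_left (x : Fin d → ℝ) : expDot 0 x = 1 := by
  simp [expDot, dotR_eq_dotProduct]

lemma expDot_zero_right (ν : Fin d → ℝ) : expDot ν 0 = 1 := by
  simp [expDot, dotR_eq_dotProduct]

lemma norm_expDot (ν x : Fin d → ℝ) : ‖expDot ν x‖ = 1 := Circle.norm_coe _

lemma conj_expDot (ν x : Fin d → ℝ) : (starRingEnd ℂ) (expDot ν x) = expDot (-ν) x := by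
  simp [expDot, dotR_eq_dotProduct, neg_dotProduct, AddChar.map_neg_eq_inv]

lemma continuous_expDot (ν : Fin d → ℝ) : Continuous (expDot ν) :=
  continuous_subtype_val.comp <| continuous_fourierChar.comp <| by
    unfold dotR; fun_prop

/-- The space `P(Ω)`, as a span of characters: this makes it closed under products
(`Submodule.span_mul_span`). -/
def trigPolys (Ω : Set (Fin d → ℝ)) : Submodule ℂ ((Fin d → ℝ) → ℂ) :=
  Submodule.span ℂ ((fun ω => expDot (intPt ω)) '' {ω | intPt ω ∈ Ω})

lemma expDot_mem_trigPolys {Ω : Set (Fin d → ℝ)} {ω : Fin d → ℤ} (h : intPt ω ∈ Ω) :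
    expDot (intPt ω) ∈ trigPolys Ω :=
  Submodule.subset_span ⟨ω, h, rfl⟩

lemma trigPolys_mono {Ω Ω' : Set (Fin d → ℝ)} (h : Ω ⊆ Ω') : trigPolys Ω ≤ trigPolys Ω' :=
  Submodule.span_mono (Set.image_mono fun _ hω => h hω)

lemma mul_mem_trigPolys_add {Ω₁ Ω₂ : Set (Fin d → ℝ)} {f g : (Fin d → ℝ) → ℂ}
    (hf : f ∈ trigPolys Ω₁) (hg : g ∈ trigPolys Ω₂) : f * g ∈ trigPolys (Ω₁ + Ω₂) := by
  have hfg := Submodule.mul_mem_mul hf hg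
  rw [trigPolys, trigPolys, Submodule.span_mul_span] at hfg
  refine Submodule.span_mono ?_ hfg
  rintro _ ⟨_, ⟨a, ha, rfl⟩, _, ⟨b, hb, rfl⟩, rfl⟩
  refine ⟨a + b, ?_, ?_⟩
  · rw [Set.mem_ofPred_eq, intPt_add]; exact Set.add_mem_add ha hb
  · funext x; simp [intPt_add, expDot_add_left]

lemma isTrigPoly_of_mem_trigPolys {Ω : Set (Fin d → ℝ)} {f : (Fin d → ℝ) → ℂ}
    (hf : f ∈ trigPolys Ω) : IsTrigPoly Ω f := by
  obtain ⟨l, hl, rfl⟩ := (Finsupp.mem_span_image_iff_linearCombination ℂ).mp hf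
  refine ⟨l, l.hasFiniteSupport, fun ω hω => hl (Finsupp.mem_support_iff.mpr hω), fun x => ?_⟩
  rw [tsum_eq_sum (s := l.support) fun ω hω => by simp [Finsupp.notMem_support_iff.mp hω],
    Finsupp.linearCombination_apply, Finsupp.sum, Finset.sum_apply]
  simp [expDot_eq_exp]

lemma lpnorm_eq_norm (p : ℝ≥0∞) [Fact (1 ≤ p)] (x : Fin d → ℝ) :
    lpnorm p x = ‖WithLp.toLp p x‖ := by
  rcases eq_or_ne p ∞ with rfl | hp
  · simp [lpnorm, PiLp.norm_eq_ciSup]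
  · have hp0 : 0 < p.toReal := ENNReal.toReal_pos (zero_lt_one.trans_le Fact.out).ne' hp
    simp [lpnorm, hp, PiLp.norm_eq_sum hp0]

lemma lpnorm_nonneg (p : ℝ≥0∞) [Fact (1 ≤ p)] (x : Fin d → ℝ) : 0 ≤ lpnorm p x := by
  rw [lpnorm_eq_norm]; exact norm_nonneg _

lemma lpnorm_add_le (p : ℝ≥0∞) [Fact (1 ≤ p)] (x y : Fin d → ℝ) :
    lpnorm p (x + y) ≤ lpnorm p x + lpnorm p y := by
  simp only [lpnorm_eq_norm, WithLp.toLp_add]; exact norm_add_le _ _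

lemma lpnorm_smul (p : ℝ≥0∞) [Fact (1 ≤ p)] (t : ℝ) (x : Fin d → ℝ) :
    lpnorm p (t • x) = |t| * lpnorm p x := by
  simp only [lpnorm_eq_norm, WithLp.toLp_smul, norm_smul, Real.norm_eq_abs]

lemma abs_le_lpnorm (p : ℝ≥0∞) [Fact (1 ≤ p)] (x : Fin d → ℝ) (i : Fin d) :
    |x i| ≤ lpnorm p x := by
  rw [lpnorm_eq_norm, ← Real.norm_eq_abs]; exact PiLp.norm_apply_le (WithLp.toLp p x) i

lemma lpnorm_le_lpnorm_of_le {p q : ℝ≥0∞} [Fact (1 ≤ p)] (hpq : p ≤ q) (x : Fin d → ℝ) :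
    lpnorm q x ≤ lpnorm p x := by
  set L := lpnorm p x
  rcases eq_or_ne q ∞ with rfl | hq
  · rw [lpnorm, if_pos rfl]
    exact Real.iSup_le (abs_le_lpnorm p x) (lpnorm_nonneg p x)
  have hp : p ≠ ∞ := ne_top_of_le_ne_top hq hpq
  have ha : 1 ≤ p.toReal := by
    simpa using ENNReal.toReal_mono hp (Fact.out : 1 ≤ p)
  have hab : p.toReal ≤ q.toReal := ENNReal.toReal_mono hq hpq
  have hL : ∑ i, |x i| ^ p.toReal = L ^ p.toReal := by
    rw [show L = _ from if_neg hp, ← Real.rpow_mul (by positivity), one_div,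
      inv_mul_cancel₀ (by positivity), Real.rpow_one]
  have hsum : ∑ i, |x i| ^ q.toReal ≤ L ^ q.toReal := calc
    ∑ i, |x i| ^ q.toReal = ∑ i, |x i| ^ p.toReal * |x i| ^ (q.toReal - p.toReal) := by
      refine Finset.sum_congr rfl fun i _ => ?_
      rw [← Real.rpow_add' (abs_nonneg _) (by linarith), add_sub_cancel]
    _ ≤ ∑ i, |x i| ^ p.toReal * L ^ (q.toReal - p.toReal) := by
      gcongr with i
      exact abs_le_lpnorm p x i
    _ = L ^ q.toReal := by
      rw [← Finset.sum_mul, hL, ← Real.rpow_add' (lpnorm_nonneg p x) (by linarith),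
        add_sub_cancel]
  rw [lpnorm, if_neg hq, one_div]
  exact (Real.rpow_inv_le_iff_of_pos (by positivity) (lpnorm_nonneg p x) (by linarith)).mpr hsum

lemma zero_mem_lpBall (p : ℝ≥0∞) [Fact (1 ≤ p)] {m : ℝ} (hm : 0 ≤ m) :
    (0 : Fin d → ℝ) ∈ lpBall d p m := by
  simpa [lpBall, lpnorm_eq_norm] using hm

lemma lpBall_add_subset (p : ℝ≥0∞) [Fact (1 ≤ p)] (a b : ℝ) :
    lpBall d p a + lpBall d p b ⊆ lpBall d p (a + b) := by
  rintro _ ⟨x, hx, y, hy, rfl⟩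
  exact (lpnorm_add_le p x y).trans (add_le_add hx hy)

lemma finite_intPt_mem_lpBall (p : ℝ≥0∞) [Fact (1 ≤ p)] (m : ℝ) :
    {ω : Fin d → ℤ | intPt ω ∈ lpBall d p m}.Finite := by
  refine (Set.Finite.pi fun _ => Set.finite_Icc (-⌈m⌉) ⌈m⌉).subset fun ω hω i _ => ?_
  obtain ⟨hlo, hhi⟩ := abs_le.mp ((abs_le_lpnorm p (intPt ω) i).trans hω)
  simp only [intPt] at hlo hhi
  have hceil := Int.le_ceil m
  exact Set.mem_Icc.mpr ⟨by exact_mod_cast (by linarith : (-⌈m⌉ : ℝ) ≤ ω i),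
    by exact_mod_cast hhi.trans hceil⟩

lemma integrableOn_cube_of_continuous {E : Type*} [NormedAddCommGroup E]
    {F : (Fin d → ℝ) → E} (hF : Continuous F) : IntegrableOn F (cube d) :=
  (hF.continuousOn.integrableOn_compact (isCompact_univ_pi fun _ => isCompact_Icc)).mono_set
    (Set.pi_mono fun _ _ => Set.Ico_subset_Icc_self)

lemma integral_Ico_fourierChar_int_mul (m : ℤ) :
    ∫ t in Set.Ico (-(1:ℝ)/2) (1/2), (𝐞 (m * t) : ℂ) = if m = 0 then 1 else 0 := by
  rcases eq_or_ne m 0 with rfl | hm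
  · norm_num
  have hc : 2 * π * Complex.I * m ≠ 0 := by simp [Real.pi_ne_zero, Complex.I_ne_zero, hm]
  have hexp : ∀ t : ℝ, (𝐞 (m * t) : ℂ) = Complex.exp (2 * π * Complex.I * m * t) := fun t => by
    rw [Real.fourierChar_apply]; push_cast; ring_nf
  rw [if_neg hm, setIntegral_congr_set Ico_ae_eq_Ioc,
    ← intervalIntegral.integral_of_le (by norm_num)]
  simp_rw [hexp]
  rw [integral_exp_mul_complex hc, div_eq_zero_iff, sub_eq_zero]
  -- the endpoints differ by one period
  left
  rw [Complex.exp_eq_exp_iff_exists_int]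
  exact ⟨m, by push_cast; ring⟩

lemma integral_cube_expDot (m : Fin d → ℤ) :
    ∫ x in cube d, expDot (intPt m) x = if m = 0 then 1 else 0 := by
  have hprod : ∀ x : Fin d → ℝ, expDot (intPt m) x = ∏ i, (𝐞 (m i * x i) : ℂ) := fun x => by
    simp [expDot, dotR, intPt, Real.fourierChar_apply, ← Complex.exp_sum, Finset.mul_sum,
      Finset.sum_mul]
  simp_rw [hprod]
  rw [cube, volume_pi, Measure.restrict_pi_pi,
    integral_fintype_prod_eq_prod (f := fun i t => (𝐞 (m i * t) : ℂ))]
  simp_rw [integral_Ico_fourierChar_int_mul]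
  by_cases hm : m = 0
  · simp [hm]
  · obtain ⟨i, hi⟩ := Function.ne_iff.mp hm
    rw [if_neg hm]
    exact Finset.prod_eq_zero (Finset.mem_univ i) (if_neg hi)

lemma integral_cube_norm_sum_expDot_sq (S : Finset (Fin d → ℤ)) (c : (Fin d → ℤ) → ℂ) :
    ∫ x in cube d, ‖∑ ω ∈ S, c ω * expDot (intPt ω) x‖ ^ 2 = ∑ ω ∈ S, ‖c ω‖ ^ 2 := by
  have hpt : ∀ x, ((‖∑ ω ∈ S, c ω * expDot (intPt ω) x‖ ^ 2 : ℝ) : ℂ) =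
      ∑ ω ∈ S, ∑ ω' ∈ S, c ω * (starRingEnd ℂ) (c ω') * expDot (intPt (ω - ω')) x := by
    intro x
    push_cast
    rw [← Complex.mul_conj', map_sum, Finset.sum_mul_sum]
    refine Finset.sum_congr rfl fun ω _ => Finset.sum_congr rfl fun ω' _ => ?_
    rw [map_mul, conj_expDot, sub_eq_add_neg, intPt_add,
      show intPt (-ω') = -intPt ω' by funext i; simp [intPt], expDot_add_left]
    ring
  have hint : ∀ ω ω' : Fin d → ℤ, IntegrableOn (expDot (intPt (ω - ω'))) (cube d) :=
    fun _ _ => integrableOn_cube_of_continuous (continuous_expDot _)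
  apply Complex.ofReal_injective
  rw [← integral_complex_ofReal]
  simp_rw [hpt]
  rw [integral_finsetSum _ fun ω _ => integrable_finsetSum _ fun ω' _ => (hint ω ω').const_mul _]
  simp_rw [integral_finsetSum _ fun ω' _ => (hint _ ω').const_mul _, integral_const_mul,
    integral_cube_expDot, sub_eq_zero, mul_ite, mul_one, mul_zero, Finset.sum_ite_eq,
    Complex.mul_conj']
  push_cast
  exact Finset.sum_congr rfl fun ω hω => if_pos hω

lemma torusL2_mul_le {g h : (Fin d → ℝ) → ℂ} {M : ℝ} (hg : Continuous g)
    (hh : ∀ x, ‖h x‖ ≤ M) : torusL2 (fun x => g x * h x) ≤ M * torusL2 g := by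
  have hM : 0 ≤ M := (norm_nonneg _).trans (hh 0)
  have hle : ∫ x in cube d, ‖g x * h x‖ ^ 2 ≤ ∫ x in cube d, M ^ 2 * ‖g x‖ ^ 2 := by
    refine integral_mono_of_nonneg (Filter.Eventually.of_forall fun x => by positivity)
      (integrableOn_cube_of_continuous (by fun_prop)) (Filter.Eventually.of_forall fun x => ?_)
    show ‖g x * h x‖ ^ 2 ≤ M ^ 2 * ‖g x‖ ^ 2
    rw [norm_mul, mul_pow, mul_comm]
    gcongr
    exact hh x
  rw [torusL2, torusL2]
  refine (Real.sqrt_le_sqrt hle).trans_eq ?_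
  rw [integral_const_mul, Real.sqrt_mul (sq_nonneg M), Real.sqrt_sq hM]

/-- `sin` lies above its chord on `[0, π/4]`. -/
lemma two_mul_sqrt_two_mul_le_sin {s : ℝ} (h0 : 0 ≤ s) (h1 : s ≤ 1/4) :
    2 * √2 * s ≤ Real.sin (π * s) := by
  have key := strictConcaveOn_sin_Icc.concaveOn.2 (Set.left_mem_Icc.mpr pi_pos.le)
    (show π / 4 ∈ Set.Icc 0 π from ⟨by positivity, by linarith [pi_pos]⟩)
    (show 0 ≤ 1 - 4 * s by linarith) (show 0 ≤ 4 * s by linarith) (by ring)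
  simp only [smul_eq_mul, mul_zero, Real.sin_zero, zero_add, Real.sin_pi_div_four] at key
  rw [show 4 * s * (π / 4) = π * s by ring] at key
  linarith

lemma mul_abs_le_norm_one_sub_fourierChar {s : ℝ} (hs : |s| ≤ 1/4) :
    4 * √2 * |s| ≤ ‖1 - (𝐞 s : ℂ)‖ := by
  have hsin : |Real.sin (π * s)| = |Real.sin (π * |s|)| := by
    rcases le_total 0 s with h | h
    · rw [abs_of_nonneg h]
    · rw [abs_of_nonpos h, mul_neg, Real.sin_neg, abs_neg]
  have hnorm : ‖1 - (𝐞 s : ℂ)‖ = 2 * |Real.sin (π * s)| := by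
    rw [norm_sub_rev, Real.fourierChar_apply, mul_comm, Complex.norm_exp_I_mul_ofReal_sub_one,
      norm_mul, Real.norm_eq_abs, Real.norm_eq_abs, abs_two]
    ring_nf
  rw [hnorm, hsin]
  linarith [two_mul_sqrt_two_mul_le_sin (abs_nonneg s) hs, le_abs_self (Real.sin (π * |s|))]

def hyperplaneFactor (q : Fin d → ℝ) (s : ℝ) (x : Fin d → ℝ) : ℂ :=
  (expDot q x - 𝐞 s) / (1 - 𝐞 s)

lemma hyperplaneFactor_apply_zero {q : Fin d → ℝ} {s : ℝ} (hs : (𝐞 s : ℂ) ≠ 1) :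
    hyperplaneFactor q s 0 = 1 := by
  rw [hyperplaneFactor, expDot_zero_right, div_self (sub_ne_zero.mpr hs.symm)]

lemma hyperplaneFactor_eq_zero {q x : Fin d → ℝ} {s : ℝ} (hx : dotR q x = s) :
    hyperplaneFactor q s x = 0 := by
  rw [hyperplaneFactor, expDot, hx, sub_self, zero_div]

lemma norm_hyperplaneFactor_le (q x : Fin d → ℝ) {s : ℝ} (hs : |s| ≤ 1/4) :
    ‖hyperplaneFactor q s x‖ ≤ √2 / (4 * |s|) := by
  rcases eq_or_ne s 0 with rfl | hs0
  · simp [hyperplaneFactor]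
  have hpos : 0 < 4 * √2 * |s| := by positivity
  have hnum : ‖expDot q x - 𝐞 s‖ ≤ 2 :=
    (norm_sub_le _ _).trans (by rw [norm_expDot, Circle.norm_coe]; norm_num)
  calc ‖hyperplaneFactor q s x‖ ≤ 2 / (4 * √2 * |s|) := by
        rw [hyperplaneFactor, norm_div]
        exact div_le_div₀ zero_le_two hnum hpos (mul_abs_le_norm_one_sub_fourierChar hs)
    _ = √2 / (4 * |s|) := by
        field_simp
        rw [Real.sq_sqrt zero_le_two]

lemma hyperplaneFactor_mem_trigPolys {Ω : Set (Fin d → ℝ)} {q : Fin d → ℤ} (s : ℝ)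
    (hq : intPt q ∈ Ω) (h0 : (0 : Fin d → ℝ) ∈ Ω) :
    hyperplaneFactor (intPt q) s ∈ trigPolys Ω := by
  have hfun : hyperplaneFactor (intPt q) s =
      (1 - (𝐞 s : ℂ))⁻¹ • (expDot (intPt q) - (𝐞 s : ℂ) • expDot (intPt 0)) := by
    funext x
    simp [hyperplaneFactor, intPt_zero, expDot_zero_left, div_eq_inv_mul]
  rw [hfun]
  exact Submodule.smul_mem _ _ <| Submodule.sub_mem _ (expDot_mem_trigPolys hq) <|
    Submodule.smul_mem _ _ (expDot_mem_trigPolys (by rwa [intPt_zero]))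

lemma exists_mem_trigPolys_lpBall_torusL2_eq (p : ℝ≥0∞) [Fact (1 ≤ p)] {m : ℝ} (hm : 0 ≤ m) :
    ∃ g ∈ trigPolys (lpBall d p m), Continuous g ∧ g 0 = 1 ∧
      torusL2 g = (√(intCard (lpBall d p m) : ℝ))⁻¹ := by
  set S := (finite_intPt_mem_lpBall (d := d) p m).toFinset
  have hcard : intCard (lpBall d p m) = S.card := Set.ncard_eq_toFinset_card _ _
  have hS : (S.card : ℂ) ≠ 0 := Nat.cast_ne_zero.mpr <| Finset.card_ne_zero.mpr
    ⟨0, by simpa [S, intPt_zero] using zero_mem_lpBall p hm⟩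
  refine ⟨∑ ω ∈ S, (S.card : ℂ)⁻¹ • expDot (intPt ω), Submodule.sum_mem _ fun ω hω =>
    Submodule.smul_mem _ _ (expDot_mem_trigPolys (by simpa [S] using hω)), ?_, ?_, ?_⟩
  · rw [Finset.sum_fn]
    exact continuous_finsetSum _ fun ω _ => continuous_const.smul (continuous_expDot _)
  · simp [expDot_zero_right, hS]
  · simp only [torusL2, Finset.sum_apply, Pi.smul_apply, smul_eq_mul]
    rw [integral_cube_norm_sum_expDot_sq, hcard, Finset.sum_const, nsmul_eq_mul, norm_inv,
      Complex.norm_natCast, ← Real.sqrt_inv]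
    congr 1
    field_simp

lemma prod_mem_trigPolys_lpBall (p : ℝ≥0∞) [Fact (1 ≤ p)] {m : ℝ} {α : Type*} (T : Finset α)
    {f : α → (Fin d → ℝ) → ℂ} (hf : ∀ k ∈ T, f k ∈ trigPolys (lpBall d p m)) :
    ∏ k ∈ T, f k ∈ trigPolys (lpBall d p (T.card * m)) := by
  classical
  induction T using Finset.induction with
  | empty =>
    have h1 : (1 : (Fin d → ℝ) → ℂ) = expDot (intPt 0) := by
      funext x; simp [intPt_zero, expDot_zero_left]
    simpa [h1] using
      expDot_mem_trigPolys (by simpa [intPt_zero] using zero_mem_lpBall (d := d) p le_rfl)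
  | insert k T hk ih =>
    rw [Finset.prod_insert hk, Finset.card_insert_of_notMem hk, Nat.cast_succ, add_one_mul,
      add_comm]
    exact trigPolys_mono (lpBall_add_subset p _ _) <| mul_mem_trigPolys_add
      (hf k (Finset.mem_insert_self k T)) (ih fun j hj => hf j (Finset.mem_insert_of_mem hj))

lemma exists_hyperplaneFactor {Ω : Set (Fin d → ℝ)} {θ : Fin d → ℝ} (hθ : lpnorm 2 θ = 1)
    {c : ℝ} (hc : c ≠ 0) {q : Fin d → ℤ} {t : ℝ} (ht : t ≠ 0) (hq : intPt q = t • θ)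
    (hqc : lpnorm 2 (intPt q) * |c| ≤ 1/4) (hqΩ : intPt q ∈ Ω) (h0 : (0 : Fin d → ℝ) ∈ Ω) :
    ∃ φ ∈ trigPolys Ω, φ 0 = 1 ∧ (∀ u, dotR θ u = c → φ u = 0) ∧
      ∀ x, ‖φ x‖ ≤ √2 / (4 * lpnorm 2 (intPt q) * |c|) := by
  have hs : |t * c| = lpnorm 2 (intPt q) * |c| := by
    rw [abs_mul, hq, lpnorm_smul, hθ, mul_one]
  rw [← hs] at hqc
  refine ⟨hyperplaneFactor (intPt q) (t * c), hyperplaneFactor_mem_trigPolys _ hqΩ h0,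
    hyperplaneFactor_apply_zero fun h1 => ?_, fun u hu => hyperplaneFactor_eq_zero ?_,
    fun x => by rw [mul_assoc, ← hs]; exact norm_hyperplaneFactor_le _ _ hqc⟩
  · have := mul_abs_le_norm_one_sub_fourierChar hqc
    rw [h1, sub_self, norm_zero] at this
    have : 0 < |t * c| := abs_pos.mpr (mul_ne_zero ht hc)
    nlinarith [Real.sqrt_pos.mpr (zero_lt_two' ℝ)]
  · rw [hq, dotR_eq_dotProduct, smul_dotProduct, ← dotR_eq_dotProduct, hu, smul_eq_mul]

end Interpolant

theorem statement19_general (d : ℕ)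
    (p : ℝ≥0∞) (hp : 2 ≤ p)
    (U : Finset (Fin d → ℝ))
    (r : ℕ) (θ : Fin r → Fin d → ℝ) (cv : Fin r → ℝ)
    (hθ : ∀ k, lpnorm 2 (θ k) = 1) (hcv : ∀ k, cv k ≠ 0)
    (hcover : ∀ u ∈ U, u ≠ 0 → ∃ k, dotR (θ k) u = cv k)
    (n : ℝ) (hn : 0 < n)
    (hη : ∀ k, |cv k| ≤ ((r : ℝ) + 1) / (4 * n))
    (qv : Fin r → Fin d → ℤ)
    (hqnormal : ∀ k, ∃ t : ℝ, t ≠ 0 ∧ intPt (qv k) = t • θ k)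
    (hqnorm : ∀ k, lpnorm 2 (intPt (qv k)) ≤ n / ((r : ℝ) + 1)) :
    ∃ f : (Fin d → ℝ) → ℂ,
      IsTrigPoly (lpBall d p n) f ∧ f 0 = 1 ∧
      (∀ u ∈ U, u ≠ 0 → f u = 0) ∧
      torusL2 f ≤ Real.sqrt (2 ^ r / (intCard (lpBall d p (n / ((r : ℝ) + 1))) : ℝ)) *
        ∏ k, 1 / (4 * lpnorm 2 (intPt (qv k)) * |cv k|) := by
  have : Fact (1 ≤ p) := ⟨one_le_two.trans hp⟩
  set m := n / ((r : ℝ) + 1) with hm_def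
  have hm : 0 ≤ m := by positivity
  choose t ht hq using hqnormal
  have hqc : ∀ k, lpnorm 2 (intPt (qv k)) * |cv k| ≤ 1/4 := fun k => calc
    _ ≤ m * (((r : ℝ) + 1) / (4 * n)) := mul_le_mul (hqnorm k) (hη k) (abs_nonneg _) hm
    _ = 1/4 := by rw [hm_def]; field_simp
  choose φ hφΩ hφ0 hφU hφle using fun k => exists_hyperplaneFactor (hθ k) (hcv k) (ht k) (hq k)
    (hqc k) ((lpnorm_le_lpnorm_of_le hp _).trans (hqnorm k)) (zero_mem_lpBall p hm)
  obtain ⟨g, hgΩ, hgc, hg0, hgL2⟩ := exists_mem_trigPolys_lpBall_torusL2_eq (d := d) p hm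
  have hf : g * ∏ k, φ k ∈ trigPolys (lpBall d p n) := by
    refine trigPolys_mono ((lpBall_add_subset p _ _).trans_eq ?_)
      (mul_mem_trigPolys_add hgΩ (prod_mem_trigPolys_lpBall p _ fun k _ => hφΩ k))
    rw [Finset.card_univ, Fintype.card_fin, ← one_add_mul, add_comm, hm_def,
      mul_div_cancel₀ _ (by positivity)]
  refine ⟨g * ∏ k, φ k, isTrigPoly_of_mem_trigPolys hf, ?_, fun u hu hu0 => ?_, ?_⟩
  · simp [Finset.prod_apply, hg0, hφ0]
  · obtain ⟨k, hk⟩ := hcover u hu hu0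
    simp only [Pi.mul_apply, Finset.prod_apply]
    exact mul_eq_zero_of_right _ (Finset.prod_eq_zero (Finset.mem_univ k) (hφU k u hk))
  calc torusL2 (g * ∏ k, φ k)
      ≤ (∏ k, √2 / (4 * lpnorm 2 (intPt (qv k)) * |cv k|)) * torusL2 g :=
        torusL2_mul_le hgc fun x => by
          rw [Finset.prod_apply, norm_prod]
          exact Finset.prod_le_prod (fun _ _ => norm_nonneg _) fun k _ => hφle k x
    _ = _ := by
        have h2 : √(2 ^ r) = √2 ^ r := by
          rw [Real.sqrt_eq_iff_eq_sq (by positivity) (by positivity), ← pow_mul, mul_comm,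
            pow_mul, Real.sq_sqrt zero_le_two]
        simp_rw [hgL2, Real.sqrt_div' _ (Nat.cast_nonneg _), h2, div_eq_mul_inv √2,
          Finset.prod_mul_distrib, Finset.prod_const, Finset.card_univ, Fintype.card_fin, one_div]
        ring

/-- local Lagrange interpolant from a hyperplane decomposition with
integer normals, trigonometric polynomial version. -/
theorem statement19 (d : ℕ) (hd : 2 ≤ d)
    (p : ℝ≥0∞) (hp : 2 ≤ p)
    (U : Finset (Fin d → ℝ)) (hU0 : (0 : Fin d → ℝ) ∈ U) (hUc : ∀ u ∈ U, u ∈ cube d)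
    (r : ℕ) (θ : Fin r → Fin d → ℝ) (cv : Fin r → ℝ)
    (hθ : ∀ k, lpnorm 2 (θ k) = 1) (hcv : ∀ k, cv k ≠ 0)
    (hcover : ∀ u ∈ U, u ≠ 0 → ∃ k, dotR (θ k) u = cv k)
    (n : ℝ) (hn : 0 < n)
    (hη : ∀ k, |cv k| ≤ ((r : ℝ) + 1) / (4 * n))
    (qv : Fin r → Fin d → ℤ)
    (hqnormal : ∀ k, ∃ t : ℝ, t ≠ 0 ∧ intPt (qv k) = t • θ k)
    (hqnorm : ∀ k, lpnorm 2 (intPt (qv k)) ≤ n / ((r : ℝ) + 1)) :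
    ∃ f : (Fin d → ℝ) → ℂ,
      IsTrigPoly (lpBall d p n) f ∧ f 0 = 1 ∧
      (∀ u ∈ U, u ≠ 0 → f u = 0) ∧
      torusL2 f ≤ Real.sqrt (2 ^ r / (intCard (lpBall d p (n / ((r : ℝ) + 1))) : ℝ)) *
        ∏ k, 1 / (4 * lpnorm 2 (intPt (qv k)) * |cv k|) :=
  statement19_general d p hp U r θ cv hθ hcv hcover n hn hη qv hqnormal hqnorm

end NF
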